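/- Let |D| = n, let S ⊆ D, let P be a (d,S)-independent property of F, and let Δ be a permutation-independent probability distribution on bijections X : {1,…,n} → D. Let p be a real multivariate polynomial in the variables indexed by {1,…,n} × D × R of total degree at most d such that 0 ≤ p(δ_{X,Y}) ≤ 1 for every pair of maps X : {1,…,n} → D and Y : {1,…,n} → R. Then there exists a real polynomial q, in the variables δ_{i,x,y} for (i,x,y) ∈ {1,…,n} × S × R together with variables ξ_{i,x} for i ∈ {1,…,n} and x ∈ D∖S, with total degree at most the total degree of p, such that: (a) for every X : {1,…,n} → D and Y : {1,…,n} → R, evaluating q with δ_{i,x,y} = [X(i)=x and Y(i)=y] and ξ_{i,x} = [X(i)=x] gives a value in [0,1]; and (b) for each b ∈ {0,1}, the average over f ∈ P⁻¹(b) and X ∼ Δ of this evaluation of q at (X, f∘X) equals the average over f ∈ P⁻¹(b) and X ∼ Δ of p(δ_{X, f∘X}). -/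

import Mathlib

/-!
Let `q(X, Y)` be the average over `g ∈ F` of `p(δ_{X, Y_g})`, where `Y_g i = Y i` if `X i ∈ S`
and `Y_g i = g (X i)` otherwise. It is a polynomial of no larger degree in the reduced variables:
substitute `δ_{i,x,y}` by `[g x = y] ξ_{i,x}` for `x ∉ S`. Being an average of values of `p` on
encodings, it lies in `[0, 1]`.

For (b) fix `X`. A monomial of `p` evaluated at `δ_{X, f ∘ X}` is the indicator that `f`
satisfies at most `d` constraints `f x = y`. By `(d, S)`-independence, for `f` uniform in
`P⁻¹(b)` the constraints off `S` may be tested on an independent `g` uniform in `F` instead,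
which is exactly what evaluating `q` at `(X, f ∘ X)` does.
-/

open MvPolynomial Finset Function

theorem exists_fin_surjective_of_card_le {γ : Type*} {A : Finset γ} {k : ℕ} (hk : #A ≤ k)
    (hA : A.Nonempty ∨ k = 0) : ∃ e : Fin k → A, Surjective e := by
  refine exists_surjective_iff.2 ⟨?_, Function.Embedding.nonempty_of_card_le (by simpa using hk)⟩
  rcases hA with ⟨a, ha⟩ | rfl
  · exact ⟨fun _ => ⟨a, ha⟩⟩
  · exact ⟨Fin.elim0⟩

theorem forall_fin_agree_iff {D R : Type*} {A : Finset (D × R)} {k : ℕ} {e : Fin k → A}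
    (he : Surjective e) (f : D → R) : (∀ j, f (e j).1.1 = (e j).1.2) ↔ ∀ z ∈ A, f z.1 = z.2 :=
  (he.forall (p := fun z : A => f z.1.1 = z.1.2)).symm.trans Subtype.forall

section Independence

variable {D R : Type*} [DecidableEq R]

/-- `(d, S)`-independence of `P` under the uniform distribution on `F`, as a counting identity. -/
def IsIndependent (S : Finset D) (d : ℕ) (F : Finset (D → R)) (P : (D → R) → Fin 2) : Prop :=
  ∀ (r : ℕ) (_ : r ≤ d) (zs : Fin r → D) (_ : ∀ j, zs j ∈ S)
    (zt : Fin (d - r) → D) (_ : ∀ j, zt j ∉ S) (ys : Fin r → R) (yt : Fin (d - r) → R)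
    (b : Fin 2),
    #{f ∈ F | (∀ j, f (zt j) = yt j) ∧ (∀ j, f (zs j) = ys j) ∧ P f = b} * #F =
      #{f ∈ F | ∀ j, f (zt j) = yt j} * #{f ∈ F | (∀ j, f (zs j) = ys j) ∧ P f = b}

namespace IsIndependent

variable {S : Finset D} {d : ℕ} {F : Finset (D → R)} {P : (D → R) → Fin 2}

theorem card_filter_mul_card (hP : IsIndependent S d F P) {A B : Finset (D × R)}
    (hA : ∀ z ∈ A, z.1 ∈ S) (hB : ∀ z ∈ B, z.1 ∉ S) (hAB : #A + #B ≤ d) (b : Fin 2) :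
    #{f ∈ F | (∀ z ∈ B, f z.1 = z.2) ∧ (∀ z ∈ A, f z.1 = z.2) ∧ P f = b} * #F =
      #{f ∈ F | ∀ z ∈ B, f z.1 = z.2} * #{f ∈ F | (∀ z ∈ A, f z.1 = z.2) ∧ P f = b} := by
  rcases B.eq_empty_or_nonempty with rfl | hB_ne
  · simp only [notMem_empty, IsEmpty.forall_iff, implies_true, true_and, filter_true_of_mem,
      mul_comm]
  -- List `A` and `B` with repetitions as tuples of lengths exactly `#A` and `d - #A`.
  obtain ⟨zs, hzs⟩ := exists_fin_surjective_of_card_le le_rfl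
    (A.eq_empty_or_nonempty.symm.imp_right card_eq_zero.2)
  obtain ⟨zt, hzt⟩ := exists_fin_surjective_of_card_le (k := d - #A) (by omega) (.inl hB_ne)
  have h := hP #A (by omega) (fun j => (zs j).1.1) (fun j => hA _ (zs j).2)
    (fun j => (zt j).1.1) (fun j => hB _ (zt j).2) (fun j => (zs j).1.2) (fun j => (zt j).1.2) b
  simpa only [forall_fin_agree_iff hzs, forall_fin_agree_iff hzt] using h

theorem sum_card_filter_piecewise [DecidableEq D] (hP : IsIndependent S d F P) {C : Finset (D × R)}
    (hC : #C ≤ d) (b : Fin 2) :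
    ∑ f ∈ F with P f = b, #{f' ∈ F | ∀ z ∈ C, S.piecewise f f' z.1 = z.2} =
      #F * #{f ∈ F | P f = b ∧ ∀ z ∈ C, f z.1 = z.2} := by
  set A := {z ∈ C | z.1 ∈ S}
  set B := {z ∈ C | z.1 ∉ S}
  have hsplit (g : D → R) :
      (∀ z ∈ C, g z.1 = z.2) ↔ (∀ z ∈ B, g z.1 = z.2) ∧ ∀ z ∈ A, g z.1 = z.2 := by
    simp only [A, B, mem_filter]
    exact ⟨fun h => ⟨fun z hz => h z hz.1, fun z hz => h z hz.1⟩,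
      fun h z hz => if hS : z.1 ∈ S then h.2 z ⟨hz, hS⟩ else h.1 z ⟨hz, hS⟩⟩
  have hpiecewise (f f' : D → R) :
      (∀ z ∈ C, S.piecewise f f' z.1 = z.2) ↔
        (∀ z ∈ A, f z.1 = z.2) ∧ ∀ z ∈ B, f' z.1 = z.2 := by
    rw [hsplit, and_comm]
    refine and_congr (forall₂_congr fun z hz => ?_) (forall₂_congr fun z hz => ?_)
    · rw [S.piecewise_eq_of_mem _ _ (mem_filter.1 hz).2]
    · rw [S.piecewise_eq_of_notMem _ _ (mem_filter.1 hz).2]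
  calc ∑ f ∈ F with P f = b, #{f' ∈ F | ∀ z ∈ C, S.piecewise f f' z.1 = z.2}
      = ∑ f ∈ F with P f = b,
          if ∀ z ∈ A, f z.1 = z.2 then #{f' ∈ F | ∀ z ∈ B, f' z.1 = z.2} else 0 := by
        refine sum_congr rfl fun f _ => ?_
        rw [filter_congr fun f' _ => hpiecewise f f']
        split_ifs with hf
        · simp only [eq_true hf, true_and]
        · simp only [eq_false hf, false_and, filter_false, card_empty]
    _ = #{f ∈ F | ∀ z ∈ B, f z.1 = z.2} * #{f ∈ F | (∀ z ∈ A, f z.1 = z.2) ∧ P f = b} := by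
        rw [sum_ite, sum_const_zero, add_zero, sum_const, smul_eq_mul, filter_filter, mul_comm]
        simp only [and_comm]
    _ = #F * #{f ∈ F | P f = b ∧ ∀ z ∈ C, f z.1 = z.2} := by
        rw [← hP.card_filter_mul_card (fun z hz => (mem_filter.1 hz).2)
          (fun z hz => (mem_filter.1 hz).2) (by rw [card_filter_add_card_filter_not]; exact hC),
          mul_comm]
        simp only [hsplit, and_assoc, and_comm]
        rfl

end IsIndependent
end Independence

section Polynomials

variable {σ τ K : Type*} [CommSemiring K]

theorem eval_monomial_boole (c : σ → Prop) [DecidablePred c] (m : σ →₀ ℕ) (a : K) :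
    eval (fun v => if c v then 1 else 0) (monomial m a) =
      a * if ∀ v ∈ m.support, c v then 1 else 0 := by
  rw [eval_monomial, Finsupp.prod, ← prod_boole]
  congr 1
  refine prod_congr rfl fun v hv => ?_
  split_ifs <;> simp [Finsupp.mem_support_iff.1 hv]

theorem eval_bind₁ (f : τ → K) (g : σ → MvPolynomial τ K) (p : MvPolynomial σ K) :
    eval f (bind₁ g p) = eval (fun v => eval f (g v)) p :=
  eval₂Hom_bind₁ _ _ _ _

theorem card_support_le_totalDegree {p : MvPolynomial σ K} {m : σ →₀ ℕ} (hm : m ∈ p.support) :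
    #m.support ≤ p.totalDegree :=
  calc #m.support = ∑ _ ∈ m.support, 1 := card_eq_sum_ones _
    _ ≤ m.sum fun _ e => e :=
      sum_le_sum fun _ hv => Nat.one_le_iff_ne_zero.2 (Finsupp.mem_support_iff.1 hv)
    _ ≤ p.totalDegree := le_totalDegree hm

theorem totalDegree_bind₁_le {g : σ → MvPolynomial τ K} (hg : ∀ v, (g v).totalDegree ≤ 1)
    (p : MvPolynomial σ K) : (bind₁ g p).totalDegree ≤ p.totalDegree := by
  conv_lhs => rw [p.as_sum]
  rw [map_sum]
  refine totalDegree_finsetSum_le fun m hm => ?_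
  rw [bind₁_monomial]
  calc (C (p.coeff m) * ∏ v ∈ m.support, g v ^ m v).totalDegree
      ≤ 0 + ∑ v ∈ m.support, m v * 1 := by
        refine (totalDegree_mul _ _).trans (add_le_add (totalDegree_C _).le ?_)
        refine (totalDegree_finsetProd _ _).trans (sum_le_sum fun v _ => ?_)
        exact (totalDegree_pow _ _).trans (Nat.mul_le_mul_left _ (hg v))
    _ ≤ p.totalDegree := by simpa [Finsupp.sum] using le_totalDegree hm

end Polynomials

section Encodings

variable {D R : Type*} [DecidableEq D] [DecidableEq R] {n : ℕ}

def encoding (X : Fin n → D) (Y : Fin n → R) : Fin n × D × R → ℝ :=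
  fun v => if X v.1 = v.2.1 ∧ Y v.1 = v.2.2 then 1 else 0

theorem eval_encoding_comp_monomial (X : Fin n → D) (g : D → R) (m : Fin n × D × R →₀ ℕ)
    (a : ℝ) :
    eval (encoding X (g ∘ X)) (monomial m a) =
      a * (if ∀ v ∈ m.support, X v.1 = v.2.1 then 1 else 0) *
        if ∀ z ∈ m.support.image Prod.snd, g z.1 = z.2 then 1 else 0 := by
  unfold encoding
  rw [eval_monomial_boole, mul_assoc, ite_zero_mul_ite_zero, one_mul]
  congr 2
  simp only [forall_mem_image, ← forall₂_and, comp_apply]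
  exact propext <| forall₂_congr fun v _ => and_congr_right fun hv => by rw [hv]

namespace IsIndependent

variable {S : Finset D} {d : ℕ} {F : Finset (D → R)} {P : (D → R) → Fin 2}

theorem sum_sum_eval_encoding_piecewise_monomial (hP : IsIndependent S d F P)
    {m : Fin n × D × R →₀ ℕ} (hm : #m.support ≤ d) (a : ℝ) (X : Fin n → D) (b : Fin 2) :
    ∑ f ∈ F with P f = b, ∑ f' ∈ F, eval (encoding X (S.piecewise f f' ∘ X)) (monomial m a) =
      #F * ∑ f ∈ F with P f = b, eval (encoding X (f ∘ X)) (monomial m a) := by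
  have h := hP.sum_card_filter_piecewise (C := m.support.image Prod.snd) (card_image_le.trans hm) b
  simp only [eval_encoding_comp_monomial, ← mul_sum, sum_boole, filter_filter]
  rw [← Nat.cast_sum, h]
  push_cast
  ring

theorem sum_sum_eval_encoding_piecewise (hP : IsIndependent S d F P)
    {p : MvPolynomial (Fin n × D × R) ℝ} (hp : p.totalDegree ≤ d) (X : Fin n → D) (b : Fin 2) :
    ∑ f ∈ F with P f = b, ∑ f' ∈ F, eval (encoding X (S.piecewise f f' ∘ X)) p =
      #F * ∑ f ∈ F with P f = b, eval (encoding X (f ∘ X)) p := by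
  rw [p.as_sum]
  simp only [map_sum]
  simp_rw [sum_comm (s := F) (t := p.support)]
  rw [sum_comm (t := p.support), sum_comm (t := p.support), mul_sum]
  exact sum_congr rfl fun m hm =>
    hP.sum_sum_eval_encoding_piecewise_monomial ((card_support_le_totalDegree hm).trans hp) _ X b

end IsIndependent

def reducedEncoding (S : Finset D) (X : Fin n → D) (Y : Fin n → R) :
    (Fin n × {x : D // x ∈ S} × R) ⊕ (Fin n × {x : D // x ∉ S}) → ℝ :=
  Sum.elim (fun v => if X v.1 = (v.2.1 : D) ∧ Y v.1 = v.2.2 then 1 else 0)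
    (fun v => if X v.1 = (v.2 : D) then 1 else 0)

noncomputable def freezeOutside (S : Finset D) (g : D → R) (v : Fin n × D × R) :
    MvPolynomial ((Fin n × {x : D // x ∈ S} × R) ⊕ (Fin n × {x : D // x ∉ S})) ℝ :=
  if h : v.2.1 ∈ S then X (.inl (v.1, ⟨v.2.1, h⟩, v.2.2))
  else if g v.2.1 = v.2.2 then X (.inr (v.1, ⟨v.2.1, h⟩)) else 0

theorem totalDegree_freezeOutside_le (S : Finset D) (g : D → R) (v : Fin n × D × R) :
    (freezeOutside S g v).totalDegree ≤ 1 := by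
  unfold freezeOutside
  split_ifs <;> simp

theorem eval_reducedEncoding_freezeOutside (S : Finset D) (X : Fin n → D) (Y : Fin n → R)
    (g : D → R) (v : Fin n × D × R) :
    eval (reducedEncoding S X Y) (freezeOutside S g v) =
      encoding X (fun i => if X i ∈ S then Y i else g (X i)) v := by
  unfold freezeOutside reducedEncoding encoding
  by_cases hS : v.2.1 ∈ S <;> by_cases hX : X v.1 = v.2.1 <;> by_cases hg : g v.2.1 = v.2.2 <;>
    simp_all

noncomputable def reducedPolynomial (S : Finset D) (F : Finset (D → R))
    (p : MvPolynomial (Fin n × D × R) ℝ) :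
    MvPolynomial ((Fin n × {x : D // x ∈ S} × R) ⊕ (Fin n × {x : D // x ∉ S})) ℝ :=
  (#F : ℝ)⁻¹ • ∑ g ∈ F, bind₁ (freezeOutside S g) p

variable {S : Finset D} {F : Finset (D → R)} {p : MvPolynomial (Fin n × D × R) ℝ}

theorem totalDegree_reducedPolynomial_le : (reducedPolynomial S F p).totalDegree ≤ p.totalDegree :=
  (totalDegree_smul_le _ _).trans <| totalDegree_finsetSum_le fun g _ =>
    totalDegree_bind₁_le (totalDegree_freezeOutside_le S g) p

theorem eval_reducedEncoding_reducedPolynomial (X : Fin n → D) (Y : Fin n → R) :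
    eval (reducedEncoding S X Y) (reducedPolynomial S F p) =
      (#F : ℝ)⁻¹ * ∑ g ∈ F, eval (encoding X (fun i => if X i ∈ S then Y i else g (X i))) p := by
  rw [reducedPolynomial, smul_eval, map_sum]
  congr 1
  refine sum_congr rfl fun g _ => ?_
  simp only [eval_bind₁, eval_reducedEncoding_freezeOutside]

theorem eval_reducedEncoding_reducedPolynomial_mem_Icc
    (hbd : ∀ (X : Fin n → D) (Y : Fin n → R), eval (encoding X Y) p ∈ Set.Icc 0 1)
    (X : Fin n → D) (Y : Fin n → R) :
    eval (reducedEncoding S X Y) (reducedPolynomial S F p) ∈ Set.Icc 0 1 := by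
  rw [eval_reducedEncoding_reducedPolynomial]
  have h (g : D → R) := hbd X (fun i => if X i ∈ S then Y i else g (X i))
  refine ⟨mul_nonneg (by positivity) (sum_nonneg fun g _ => (h g).1), ?_⟩
  refine inv_mul_le_one_of_le₀ ?_ (Nat.cast_nonneg _)
  simpa using sum_le_card_nsmul F _ 1 fun g _ => (h g).2

theorem IsIndependent.sum_eval_reducedEncoding_reducedPolynomial {d : ℕ} {P : (D → R) → Fin 2}
    (hP : IsIndependent S d F P) (hF : F.Nonempty) (hp : p.totalDegree ≤ d) (X : Fin n → D)
    (b : Fin 2) :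
    ∑ f ∈ F with P f = b, eval (reducedEncoding S X (f ∘ X)) (reducedPolynomial S F p) =
      ∑ f ∈ F with P f = b, eval (encoding X (f ∘ X)) p := by
  simp only [eval_reducedEncoding_reducedPolynomial, ← mul_sum]
  calc (#F : ℝ)⁻¹ * ∑ f ∈ F with P f = b, ∑ g ∈ F,
        eval (encoding X (fun i => if X i ∈ S then f (X i) else g (X i))) p
      = (#F : ℝ)⁻¹ * (#F * ∑ f ∈ F with P f = b, eval (encoding X (f ∘ X)) p) :=
        congrArg _ (hP.sum_sum_eval_encoding_piecewise hp X b)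
    _ = _ := inv_mul_cancel_left₀ (Nat.cast_ne_zero.2 hF.card_pos.ne') _

end Encodings

theorem stmt4_general {D R : Type} [Fintype D] [DecidableEq D] [DecidableEq R]
    (n : ℕ)
    (S : Finset D) (d : ℕ)
    (F : Finset (D → R)) (hF : F.Nonempty)
    (P : (D → R) → Fin 2)
    (hInd : ∀ (r : ℕ) (_ : r ≤ d)
        (zs : Fin r → D) (_ : ∀ j, zs j ∈ S)
        (zt : Fin (d - r) → D) (_ : ∀ j, zt j ∉ S)
        (ys : Fin r → R) (yt : Fin (d - r) → R) (b : Fin 2),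
      (F.filter (fun f =>
          (∀ j, f (zt j) = yt j) ∧ (∀ j, f (zs j) = ys j) ∧ P f = b)).card
          * F.card =
        (F.filter (fun f => ∀ j, f (zt j) = yt j)).card *
          (F.filter (fun f => (∀ j, f (zs j) = ys j) ∧ P f = b)).card)
    (Δ : (Fin n ≃ D) → ℝ)
    (p : MvPolynomial (Fin n × D × R) ℝ)
    (hdeg : p.totalDegree ≤ d)
    (hbd : ∀ (X : Fin n → D) (Y : Fin n → R),
      0 ≤ MvPolynomial.eval
          (fun v => if X v.1 = v.2.1 ∧ Y v.1 = v.2.2 then (1 : ℝ) else 0) p ∧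
        MvPolynomial.eval
          (fun v => if X v.1 = v.2.1 ∧ Y v.1 = v.2.2 then (1 : ℝ) else 0) p ≤ 1) :
    ∃ q : MvPolynomial
        ((Fin n × {x : D // x ∈ S} × R) ⊕ (Fin n × {x : D // x ∉ S})) ℝ,
      q.totalDegree ≤ p.totalDegree ∧
      -- (a): q is bounded in [0,1] on every encoding of a pair (X, Y)
      (∀ (X : Fin n → D) (Y : Fin n → R),
        0 ≤ MvPolynomial.eval
            (Sum.elim
              (fun v => if X v.1 = (v.2.1 : D) ∧ Y v.1 = v.2.2 then (1 : ℝ) else 0)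
              (fun v => if X v.1 = (v.2 : D) then (1 : ℝ) else 0)) q ∧
          MvPolynomial.eval
            (Sum.elim
              (fun v => if X v.1 = (v.2.1 : D) ∧ Y v.1 = v.2.2 then (1 : ℝ) else 0)
              (fun v => if X v.1 = (v.2 : D) then (1 : ℝ) else 0)) q ≤ 1) ∧
      -- (b): q and p have the same average over f ∈ P⁻¹(b) and X ∼ Δ
      (∀ b : Fin 2,
        (1 / ((F.filter (fun f => P f = b)).card : ℝ)) *
            ∑ f ∈ F.filter (fun f => P f = b), ∑ X : Fin n ≃ D, Δ X *
              MvPolynomial.eval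
                (Sum.elim
                  (fun v => if X v.1 = (v.2.1 : D) ∧ f (X v.1) = v.2.2
                    then (1 : ℝ) else 0)
                  (fun v => if X v.1 = (v.2 : D) then (1 : ℝ) else 0)) q =
        (1 / ((F.filter (fun f => P f = b)).card : ℝ)) *
            ∑ f ∈ F.filter (fun f => P f = b), ∑ X : Fin n ≃ D, Δ X *
              MvPolynomial.eval
                (fun v => if X v.1 = v.2.1 ∧ f (X v.1) = v.2.2 then (1 : ℝ) else 0)
                p) := by
  refine ⟨reducedPolynomial S F p, totalDegree_reducedPolynomial_le,
    eval_reducedEncoding_reducedPolynomial_mem_Icc hbd, fun b => ?_⟩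
  congr 1
  rw [sum_comm (s := F.filter _), sum_comm (s := F.filter _)]
  refine sum_congr rfl fun X _ => ?_
  simp only [← mul_sum]
  exact congrArg _ (IsIndependent.sum_eval_reducedEncoding_reducedPolynomial hInd hF hdeg X b)

/-- Given a `(d,S)`-independent property `P`, a permutation-independent
distribution `Δ` on bijections `Fin n ≃ D`, and a real polynomial `p` in variables
indexed by `Fin n × D × R` of total degree at most `d` bounded in `[0,1]` on all
encodings `δ_{X,Y}`, there is a polynomial `q` of no larger total degree in the
variables `δ_{i,x,y}` for `x ∈ S` together with `ξ_{i,x}` for `x ∉ S` such that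
(a) `q` is bounded in `[0,1]` on all encodings and (b) for each `b ∈ {0,1}`, `q` and
`p` have the same average over `f ∈ P⁻¹ b` and `X ∼ Δ`. -/
theorem stmt4 {D R : Type} [Fintype D] [Fintype R] [DecidableEq D] [DecidableEq R]
    [Nonempty D] [Nonempty R]
    (n : ℕ) (hn : Fintype.card D = n)
    (S : Finset D) (d : ℕ)
    (F : Finset (D → R)) (hF : F.Nonempty)
    (P : (D → R) → Fin 2)
    (hP0 : (F.filter (fun f => P f = 0)).Nonempty)
    (hP1 : (F.filter (fun f => P f = 1)).Nonempty)
    (hInd : ∀ (r : ℕ) (_ : r ≤ d)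
        (zs : Fin r → D) (_ : ∀ j, zs j ∈ S)
        (zt : Fin (d - r) → D) (_ : ∀ j, zt j ∉ S)
        (ys : Fin r → R) (yt : Fin (d - r) → R) (b : Fin 2),
      (F.filter (fun f =>
          (∀ j, f (zt j) = yt j) ∧ (∀ j, f (zs j) = ys j) ∧ P f = b)).card
          * F.card =
        (F.filter (fun f => ∀ j, f (zt j) = yt j)).card *
          (F.filter (fun f => (∀ j, f (zs j) = ys j) ∧ P f = b)).card)
    (Δ : (Fin n ≃ D) → ℝ)
    (hΔ0 : ∀ X, 0 ≤ Δ X) (hΔ1 : ∑ X : Fin n ≃ D, Δ X = 1)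
    (hΔperm : ∀ (σ : Equiv.Perm D) (X : Fin n ≃ D), Δ (X.trans σ) = Δ X)
    (p : MvPolynomial (Fin n × D × R) ℝ)
    (hdeg : p.totalDegree ≤ d)
    (hbd : ∀ (X : Fin n → D) (Y : Fin n → R),
      0 ≤ MvPolynomial.eval
          (fun v => if X v.1 = v.2.1 ∧ Y v.1 = v.2.2 then (1 : ℝ) else 0) p ∧
        MvPolynomial.eval
          (fun v => if X v.1 = v.2.1 ∧ Y v.1 = v.2.2 then (1 : ℝ) else 0) p ≤ 1) :
    ∃ q : MvPolynomial
        ((Fin n × {x : D // x ∈ S} × R) ⊕ (Fin n × {x : D // x ∉ S})) ℝ,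
      q.totalDegree ≤ p.totalDegree ∧
      -- (a): q is bounded in [0,1] on every encoding of a pair (X, Y)
      (∀ (X : Fin n → D) (Y : Fin n → R),
        0 ≤ MvPolynomial.eval
            (Sum.elim
              (fun v => if X v.1 = (v.2.1 : D) ∧ Y v.1 = v.2.2 then (1 : ℝ) else 0)
              (fun v => if X v.1 = (v.2 : D) then (1 : ℝ) else 0)) q ∧
          MvPolynomial.eval
            (Sum.elim
              (fun v => if X v.1 = (v.2.1 : D) ∧ Y v.1 = v.2.2 then (1 : ℝ) else 0)
              (fun v => if X v.1 = (v.2 : D) then (1 : ℝ) else 0)) q ≤ 1) ∧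
      -- (b): q and p have the same average over f ∈ P⁻¹(b) and X ∼ Δ
      (∀ b : Fin 2,
        (1 / ((F.filter (fun f => P f = b)).card : ℝ)) *
            ∑ f ∈ F.filter (fun f => P f = b), ∑ X : Fin n ≃ D, Δ X *
              MvPolynomial.eval
                (Sum.elim
                  (fun v => if X v.1 = (v.2.1 : D) ∧ f (X v.1) = v.2.2
                    then (1 : ℝ) else 0)
                  (fun v => if X v.1 = (v.2 : D) then (1 : ℝ) else 0)) q =
        (1 / ((F.filter (fun f => P f = b)).card : ℝ)) *
            ∑ f ∈ F.filter (fun f => P f = b), ∑ X : Fin n ≃ D, Δ X *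
              MvPolynomial.eval
                (fun v => if X v.1 = v.2.1 ∧ f (X v.1) = v.2.2 then (1 : ℝ) else 0)
                p) :=
  stmt4_general n S d F hF P hInd Δ p hdeg hbd
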